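/- arXiv:1411.2955 — 7 statements merged into one kernel-verified Lean document; each statement's English description precedes it below -/
import Mathlib

section
/- Let X be a type, n and k natural numbers with k ≥ 1, and I_1, …, I_k nonempty finite subsets of Fin n. Consider the simple graph on the index set {1,…,k} in which l and m are adjacent exactly when l ≠ m and I_l ∩ I_m ≠ ∅. If this intersection graph is connected, then ⋂_{l=1}^{k} Δ_{I_l} = Δ_{I_1 ∪ ⋯ ∪ I_k} as subsets of Fin n → X. -/
/-- The diagonal Δ_S: the set of functions `Fin n → X` that are constant on `S`. -/
def diag {X : Type*} {n : ℕ} (S : Finset (Fin n)) : Set (Fin n → X) :=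
  {x | ∀ a ∈ S, ∀ b ∈ S, x a = x b}

/-- If the intersection graph of the nonempty finite sets `I 1, …, I k` (two distinct
indices adjacent iff the corresponding sets intersect) is connected, then the
intersection of the diagonals `Δ_{I l}` is the diagonal of the union. -/
theorem iInter_diag_eq_diag_union_of_connected {X : Type*} {n k : ℕ} (hk : 1 ≤ k)
    (I : Fin k → Finset (Fin n)) (hne : ∀ l, (I l).Nonempty)
    (hconn : (SimpleGraph.fromRel (fun l m : Fin k => (I l ∩ I m).Nonempty)).Connected) :
    (⋂ l, diag (X := X) (I l)) = diag (X := X) (Finset.univ.biUnion I) := by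
  ext x
  simp only [Set.mem_iInter, diag, Set.mem_setOf_eq, Finset.mem_biUnion, Finset.mem_univ,
    true_and]
  constructor
  · intro hx
    -- f l = value of x on I l
    set G := SimpleGraph.fromRel (fun l m : Fin k => (I l ∩ I m).Nonempty) with hG
    have key : ∀ l m : Fin k, G.Adj l m → x (hne l).choose = x (hne m).choose := by
      intro l m hadj
      obtain ⟨-, h | h⟩ := hadj
      · obtain ⟨e, he⟩ := h
        rw [Finset.mem_inter] at he
        exact (hx l (hne l).choose (hne l).choose_spec e he.1).trans
          (hx m e he.2 (hne m).choose (hne m).choose_spec)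
      · obtain ⟨e, he⟩ := h
        rw [Finset.mem_inter] at he
        exact (hx l (hne l).choose (hne l).choose_spec e he.2).trans
          (hx m e he.1 (hne m).choose (hne m).choose_spec)
    have walk : ∀ l m : Fin k, G.Walk l m → x (hne l).choose = x (hne m).choose := by
      intro l m w
      induction w with
      | nil => rfl
      | cons h _ ih => exact (key _ _ h).trans ih
    rintro a ⟨l, hl⟩ b ⟨m, hm⟩
    obtain ⟨w⟩ := hconn l m
    calc x a = x (hne l).choose := hx l a hl (hne l).choose (hne l).choose_spec
      _ = x (hne m).choose := walk l m w
      _ = x b := hx m (hne m).choose (hne m).choose_spec b hm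
  · intro hx l a ha b hb
    exact hx a ⟨l, ha⟩ b ⟨l, hb⟩
end

section
/- Let X be a type, n a natural number, and I_1, …, I_k finite subsets of Fin n, each of cardinality at least 2. Then there exist pairwise disjoint finite subsets J_1, …, J_{k'} of Fin n with k' ≤ k such that: each J_j equals the union of those I_l that are contained in J_j; each J_j contains at least one I_l; every I_l is contained in exactly one J_j; and ⋂_{l=1}^{k} Δ_{I_l} = ⋂_{j=1}^{k'} Δ_{J_j} as subsets of Fin n → X. -/
open Finset

theorem diag_antitone {X : Type*} {n : ℕ} :
    Antitone (diag : Finset (Fin n) → Set (Fin n → X)) :=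
  fun _ _ hST _ hx a ha b hb => hx a (hST ha) b (hST hb)

section Linking

variable {α ι : Type*} (I : ι → Finset α)

def linkSetoid : Setoid α :=
  Relation.EqvGen.setoid fun a b => ∃ l, a ∈ I l ∧ b ∈ I l

variable {I} in
theorem eq_or_mem_of_linkSetoid {a b : α} (h : linkSetoid I a b) :
    a = b ∨ (∃ l, a ∈ I l) ∧ ∃ l, b ∈ I l := by
  induction h with
  | rel a b hab => obtain ⟨l, ha, hb⟩ := hab; exact .inr ⟨⟨l, ha⟩, l, hb⟩
  | refl => exact .inl rfl
  | symm a b _ ih => exact ih.imp Eq.symm And.symm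
  | trans a b c _ _ ihab ihbc =>
    rcases ihab with rfl | ⟨ha, hb⟩
    · exact ihbc
    · exact .inr ⟨ha, ihbc.elim (· ▸ hb) And.right⟩

variable [Fintype α] [DecidableEq α]

open scoped Classical in
noncomputable def linkPartition : Finpartition (univ : Finset α) :=
  Finpartition.ofSetoid (linkSetoid I)

open scoped Classical in
noncomputable def linkBlocks : Finset (Finset α) :=
  (linkPartition I).parts.filter fun p => ∃ l, I l ⊆ p

variable {I}

theorem mem_linkBlocks {p : Finset α} :
    p ∈ linkBlocks I ↔ p ∈ (linkPartition I).parts ∧ ∃ l, I l ⊆ p := by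
  classical
  simp only [linkBlocks, mem_filter]

theorem mem_linkPartition_part_iff {a b : α} :
    b ∈ (linkPartition I).part a ↔ linkSetoid I a b := by
  classical
  exact Finpartition.mem_part_ofSetoid_iff_rel

theorem subset_linkPartition_part {l : ι} {a : α} (ha : a ∈ I l) :
    I l ⊆ (linkPartition I).part a :=
  fun _ hb => mem_linkPartition_part_iff.2 (Relation.EqvGen.rel _ _ ⟨l, ha, hb⟩)

theorem linkPartition_part_mem_linkBlocks {l : ι} {a : α} (ha : a ∈ I l) :
    (linkPartition I).part a ∈ linkBlocks I :=
  mem_linkBlocks.2 ⟨(linkPartition I).part_mem.2 (mem_univ a), l, subset_linkPartition_part ha⟩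

theorem card_linkBlocks_le [Fintype ι] (hI : ∀ l, (I l).Nonempty) :
    #(linkBlocks I) ≤ Fintype.card ι := by
  have hsub : linkBlocks I ⊆ univ.image fun l => (linkPartition I).part (hI l).choose := by
    intro p hp
    obtain ⟨hpP, l, hlp⟩ := mem_linkBlocks.1 hp
    exact mem_image.2 ⟨l, mem_univ l, (linkPartition I).part_eq_of_mem hpP (hlp (hI l).choose_spec)⟩
  exact (card_le_card hsub).trans card_image_le

theorem biUnion_filter_subset_eq_of_mem_linkBlocks [Fintype ι] (hI : ∀ l, (I l).Nonempty)
    {p : Finset α} (hp : p ∈ linkBlocks I) :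
    (univ.filter fun l => I l ⊆ p).biUnion I = p := by
  obtain ⟨hpP, l, hlp⟩ := mem_linkBlocks.1 hp
  refine (biUnion_subset.2 fun m hm => (mem_filter.1 hm).2).antisymm fun a ha => ?_
  obtain ⟨b, hb⟩ := hI l
  have hpb : (linkPartition I).part b = p := (linkPartition I).part_eq_of_mem hpP (hlp hb)
  rcases eq_or_mem_of_linkSetoid (mem_linkPartition_part_iff.1 (hpb ▸ ha)) with rfl | ⟨-, m, ham⟩
  · exact mem_biUnion.2 ⟨l, mem_filter.2 ⟨mem_univ l, hlp⟩, hb⟩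
  · have hmp : I m ⊆ p := (linkPartition I).part_eq_of_mem hpP ha ▸ subset_linkPartition_part ham
    exact mem_biUnion.2 ⟨m, mem_filter.2 ⟨mem_univ m, hmp⟩, ham⟩

end Linking

theorem iInter_diag_eq_iInter_diag_of_mem_linkPartition {X : Type*} {n : ℕ} {ι κ : Type*}
    {I : ι → Finset (Fin n)} {J : κ → Finset (Fin n)} (hJ : ∀ j, J j ∈ (linkPartition I).parts)
    (hIJ : ∀ l, ∃ j, I l ⊆ J j) :
    (⋂ l, diag (X := X) (I l)) = ⋂ j, diag (X := X) (J j) := by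
  ext x
  simp only [Set.mem_iInter]
  refine ⟨fun hx j a ha b hb => ?_, fun hx l => ?_⟩
  · have hker : linkSetoid I ≤ Setoid.ker x :=
      Setoid.eqvGen_le fun a b ⟨l, ha, hb⟩ => hx l a ha b hb
    have hab : b ∈ (linkPartition I).part a := (linkPartition I).part_eq_of_mem (hJ j) ha ▸ hb
    exact hker (mem_linkPartition_part_iff.1 hab)
  · obtain ⟨j, hj⟩ := hIJ l
    exact diag_antitone hj (hx j)

/-- Any intersection of diagonals `Δ_{I 1} ∩ ⋯ ∩ Δ_{I k}` (with each `|I l| ≥ 2`) can be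
rewritten uniquely as an intersection of diagonals `Δ_{J 1} ∩ ⋯ ∩ Δ_{J k'}` where the
`J j` are pairwise disjoint, each `J j` is the union of the `I l` it contains, each `J j`
contains some `I l`, and each `I l` is contained in exactly one `J j`. -/
theorem iInter_diag_eq_iInter_diag_pairwise_disjoint {X : Type*} {n k : ℕ}
    (I : Fin k → Finset (Fin n)) (hI : ∀ l, 2 ≤ (I l).card) :
    ∃ (k' : ℕ) (J : Fin k' → Finset (Fin n)), k' ≤ k ∧
      (∀ j j', j ≠ j' → Disjoint (J j) (J j')) ∧
      (∀ j, J j = (Finset.univ.filter (fun l => I l ⊆ J j)).biUnion I) ∧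
      (∀ j, ∃ l, I l ⊆ J j) ∧
      (∀ l, ∃! j, I l ⊆ J j) ∧
      (⋂ l, diag (X := X) (I l)) = ⋂ j, diag (X := X) (J j) := by
  have hIne : ∀ l, (I l).Nonempty := fun l => card_pos.1 (zero_lt_two.trans_le (hI l))
  let e := (linkBlocks I).equivFin
  let J : Fin #(linkBlocks I) → Finset (Fin n) := fun j => e.symm j
  have hJ : ∀ j, J j ∈ (linkPartition I).parts ∧ ∃ l, I l ⊆ J j :=
    fun j => mem_linkBlocks.1 (e.symm j).2
  have hJinj : J.Injective := Subtype.val_injective.comp e.symm.injective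
  have hIJ : ∀ l, I l ⊆ J (e ⟨_, linkPartition_part_mem_linkBlocks (hIne l).choose_spec⟩) :=
    fun l => by simpa [J] using subset_linkPartition_part (hIne l).choose_spec
  refine ⟨#(linkBlocks I), J, (card_linkBlocks_le hIne).trans_eq (Fintype.card_fin k),
    fun j j' hjj' => (linkPartition I).disjoint (hJ j).1 (hJ j').1 (hJinj.ne hjj'),
    fun j => (biUnion_filter_subset_eq_of_mem_linkBlocks hIne (e.symm j).2).symm,
    fun j => (hJ j).2, fun l => ⟨_, hIJ l, fun j hj => ?_⟩,
    iInter_diag_eq_iInter_diag_of_mem_linkPartition (fun j => (hJ j).1) fun l => ⟨_, hIJ l⟩⟩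
  obtain ⟨a, ha⟩ := hIne l
  exact hJinj <| ((linkPartition I).part_eq_of_mem (hJ j).1 (hj ha)).symm.trans <|
    (linkPartition I).part_eq_of_mem (hJ _).1 (hIJ l ha)
end

section
/- Let X be a type with at least two elements, n a natural number, J_1, …, J_{k'} pairwise disjoint finite subsets of Fin n each of cardinality at least 2, and S a finite subset of Fin n of cardinality at least 2. If the diagonal Δ_S contains the intersection ⋂_{j=1}^{k'} Δ_{J_j} in Fin n → X, then there is exactly one index j with S ⊆ J_j. -/
/-- If `X` has at least two elements, the `J j` are pairwise disjoint with `|J j| ≥ 2`,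
`|S| ≥ 2`, and `Δ_S` contains `⋂ j, Δ_{J j}`, then there is exactly one index `j`
with `S ⊆ J j`. -/
theorem existsUnique_subset_of_diag_superset {X : Type*} [Nontrivial X] {n k' : ℕ}
    (J : Fin k' → Finset (Fin n))
    (hdisj : ∀ j j', j ≠ j' → Disjoint (J j) (J j'))
    (hJ : ∀ j, 2 ≤ (J j).card)
    (S : Finset (Fin n)) (hS : 2 ≤ S.card)
    (h : (⋂ j, diag (X := X) (J j)) ⊆ diag (X := X) S) :
    ∃! j, S ⊆ J j := by
  obtain ⟨y, z, hyz⟩ := exists_pair_ne X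
  obtain ⟨a, ha, b, hb, hab⟩ := Finset.one_lt_card.mp hS
  by_cases hcase : ∃ j₀, a ∈ J j₀
  · obtain ⟨j₀, hj₀⟩ := hcase
    have hmem : (fun i => if i ∈ J j₀ then y else z) ∈ ⋂ j, diag (X := X) (J j) := by
      simp only [Set.mem_iInter]
      intro j c hc d hd
      by_cases hj : j = j₀
      · subst hj; simp [diag, hc, hd]
      · have h1 : c ∉ J j₀ := Finset.disjoint_left.mp (hdisj j j₀ hj) hc
        have h2 : d ∉ J j₀ := Finset.disjoint_left.mp (hdisj j j₀ hj) hd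
        simp [h1, h2]
    have hsub : S ⊆ J j₀ := by
      intro s hs
      have := h hmem s hs a ha
      simp only [hj₀, if_true] at this
      by_contra hns
      simp [hns] at this
      exact hyz this.symm
    refine ⟨j₀, hsub, fun j' hj' => ?_⟩
    by_contra hne
    exact Finset.disjoint_left.mp (hdisj j' j₀ hne) (hj' ha) hj₀
  · exfalso
    push_neg at hcase
    have hmem : (fun i => if i = a then y else z) ∈ ⋂ j, diag (X := X) (J j) := by
      simp only [Set.mem_iInter]
      intro j c hc d hd
      have h1 : c ≠ a := fun h' => hcase j (h' ▸ hc)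
      have h2 : d ≠ a := fun h' => hcase j (h' ▸ hd)
      simp [h1, h2]
    have := h hmem a ha b hb
    simp [hab.symm] at this
    exact hyz this
end

section
/- Let X be a type with at least two elements, n a natural number, and S, T finite subsets of Fin n with T of cardinality at least 2. Then Δ_S ⊆ Δ_T (as subsets of Fin n → X) if and only if T ⊆ S. -/
/-- For `X` with at least two elements and `|T| ≥ 2`, one has `Δ_S ⊆ Δ_T` iff `T ⊆ S`. -/
theorem diag_subset_diag_iff {X : Type*} [Nontrivial X] {n : ℕ}
    (S T : Finset (Fin n)) (hT : 2 ≤ T.card) :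
    diag (X := X) S ⊆ diag (X := X) T ↔ T ⊆ S := by
  constructor
  · intro h t ht
    by_contra hts
    obtain ⟨y, z, hyz⟩ := exists_pair_ne X
    -- find another element of T
    obtain ⟨t', ht', htt'⟩ := Finset.exists_mem_ne (s := T) (by omega) t
    have hx : (fun a => if a = t then y else z) ∈ diag (X := X) S := by
      intro a ha b hb
      simp only
      rw [if_neg (by rintro rfl; exact hts ha), if_neg (by rintro rfl; exact hts hb)]
    have := h hx t ht t' ht'
    simp only [if_pos rfl, if_neg htt'] at this
    exact hyz this
  · intro hTS x hx a ha b hb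
    exact hx a (hTS ha) b (hTS hb)
end

section
/- Let n be a natural number and S a finite subset of Fin n. Let 𝒞 denote the (finite) set of all maximal chains between N = Fin n and S, and for each chain C ∈ 𝒞 let C′ denote its complement {T : S ⊆ T ⊆ N and T is not a member of C}. Then for any choice function f assigning to each chain C ∈ 𝒞 a set f(C) ∈ C′, the family {f(C) : C ∈ 𝒞} is not totally ordered by inclusion; that is, there exist chains C₁, C₂ ∈ 𝒞 with f(C₁) ⊄ f(C₂) and f(C₂) ⊄ f(C₁) and f(C₁) ≠ f(C₂). -/
/-- A maximal chain between the full set `Fin n` and `S`: a sequence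
`Fin n = S_0 ⊋ S_1 ⊋ ⋯ ⊋ S_k = S` of subsets with `|S_i| = n - i`, where `k = n - |S|`. -/
def IsMaxChainTo {n : ℕ} (S : Finset (Fin n))
    (C : Fin (n - S.card + 1) → Finset (Fin n)) : Prop :=
  C 0 = Finset.univ ∧
  C (Fin.last (n - S.card)) = S ∧
  (∀ i, (C i).card = n - (i : ℕ)) ∧
  ∀ i : Fin (n - S.card), C i.succ ⊂ C i.castSucc

open Finset in
private lemma card_filter_val_lt {n c : ℕ} (h : c ≤ n) :
    ((univ : Finset (Fin n)).filter (fun j : Fin n => (j : ℕ) < c)).card = c := by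
  rw [← Finset.card_range c]
  apply Finset.card_bij (fun (j : Fin n) _ => (j : ℕ))
  · intro a ha; simp only [mem_filter] at ha; simpa using ha.2
  · intro a ha b hb hab; exact Fin.ext hab
  · intro b hb
    simp only [Finset.mem_range] at hb
    exact ⟨⟨b, lt_of_lt_of_le hb h⟩, by simp [hb], rfl⟩

/-- If `f` assigns to each maximal chain `C` between `Fin n` and `S` a set of its
complement `C' = {T | S ⊆ T ⊆ Fin n, T ∉ C}`, then the family `{f C}` is not totally
ordered by inclusion: there are chains `C₁, C₂` with `f C₁` and `f C₂` incomparable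
and distinct. -/
theorem not_totally_ordered_choice_from_chain_complements {n : ℕ} (S : Finset (Fin n))
    (f : (Fin (n - S.card + 1) → Finset (Fin n)) → Finset (Fin n))
    (hf : ∀ C, IsMaxChainTo S C → S ⊆ f C ∧ f C ∉ Set.range C) :
    ∃ C₁ C₂, IsMaxChainTo S C₁ ∧ IsMaxChainTo S C₂ ∧
      ¬ f C₁ ⊆ f C₂ ∧ ¬ f C₂ ⊆ f C₁ ∧ f C₁ ≠ f C₂ := by
  classical
  by_contra hcon
  push_neg at hcon
  -- all values of `f` on maximal chains are pairwise comparable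
  have hcomp : ∀ C₁ C₂, IsMaxChainTo S C₁ → IsMaxChainTo S C₂ →
      f C₁ ⊆ f C₂ ∨ f C₂ ⊆ f C₁ := by
    intro C₁ C₂ h₁ h₂
    by_contra hc
    push_neg at hc
    exact hc.1 ((hcon C₁ C₂ h₁ h₂ hc.1 hc.2) ▸ Finset.Subset.refl _)
  have hScard : S.card ≤ n := by
    simpa using Finset.card_le_card (Finset.subset_univ S)
  -- the family of all values, together with S
  set 𝒯 : Finset (Finset (Fin n)) :=
    Finset.univ.filter (fun T => T = S ∨ ∃ C, IsMaxChainTo S C ∧ f C = T) with h𝒯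
  have hmem𝒯 : ∀ T, T ∈ 𝒯 ↔ (T = S ∨ ∃ C, IsMaxChainTo S C ∧ f C = T) := by
    intro T; simp [h𝒯]
  have hchain : ∀ T ∈ 𝒯, ∀ U ∈ 𝒯, T ⊆ U ∨ U ⊆ T := by
    intro T hT U hU
    rw [hmem𝒯] at hT hU
    rcases hT with rfl | ⟨C₁, hC₁, rfl⟩
    · rcases hU with rfl | ⟨C₂, hC₂, rfl⟩
      · exact Or.inl (Finset.Subset.refl _)
      · exact Or.inl (hf C₂ hC₂).1
    · rcases hU with rfl | ⟨C₂, hC₂, rfl⟩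
      · exact Or.inr (hf C₁ hC₁).1
      · exact hcomp C₁ C₂ hC₁ hC₂
  -- the "level" function
  set g : Fin n → ℕ := fun x => (𝒯.filter (fun T => x ∉ T)).card with hg
  have hgdef : ∀ x, g x = (𝒯.filter (fun T => x ∉ T)).card := fun x => by rw [hg]
  -- each member of 𝒯 is a sublevel set of g
  have hlevel : ∀ T ∈ 𝒯, ∀ x, x ∈ T ↔ g x ≤ (𝒯.filter (fun U => ¬ T ⊆ U)).card := by
    intro T hT x
    rw [hgdef]
    constructor
    · intro hx
      apply Finset.card_le_card
      intro U hU
      simp only [Finset.mem_filter] at hU ⊢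
      exact ⟨hU.1, fun hsub => hU.2 (hsub hx)⟩
    · intro hle
      by_contra hx
      have h1 : insert T (𝒯.filter (fun U => ¬ T ⊆ U)) ⊆ 𝒯.filter (fun U => x ∉ U) := by
        intro U hU
        rcases Finset.mem_insert.mp hU with rfl | hU
        · exact Finset.mem_filter.mpr ⟨hT, hx⟩
        · simp only [Finset.mem_filter] at hU ⊢
          refine ⟨hU.1, fun hxU => ?_⟩
          rcases hchain T hT U hU.1 with h | h
          · exact hU.2 h
          · exact hx (h hxU)
      have h2 : T ∉ 𝒯.filter (fun U => ¬ T ⊆ U) := by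
        simp [Finset.mem_filter]
      have h3 := Finset.card_le_card h1
      rw [Finset.card_insert_of_notMem h2] at h3
      omega
  -- the key and rank functions
  set key : Fin n → ℕ := fun x => g x * n + (x : ℕ) with hkey
  have hkeydef : ∀ x, key x = g x * n + (x : ℕ) := fun x => by rw [hkey]
  have hkeymono : ∀ a b : Fin n, g a < g b → key a < key b := by
    intro a b h
    have h1 : g a * n + n ≤ g b * n := by
      calc g a * n + n = (g a + 1) * n := by ring
        _ ≤ g b * n := Nat.mul_le_mul_right n h
    have ha := a.isLt
    have hb := b.isLt
    rw [hkeydef, hkeydef]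
    omega
  have key_inj : Function.Injective key := by
    intro x y hxy
    have hx : (x : ℕ) < n := x.isLt
    have hy : (y : ℕ) < n := y.isLt
    have hgxy : g x = g y := by
      rcases lt_trichotomy (g x) (g y) with h | h | h
      · exact absurd hxy (ne_of_lt (hkeymono x y h))
      · exact h
      · exact absurd hxy.symm (ne_of_lt (hkeymono y x h))
    rw [hkeydef, hkeydef, hgxy] at hxy
    exact Fin.ext (by omega)
  -- downset property w.r.t. key
  have hdown : ∀ T ∈ 𝒯, ∀ x ∈ T, ∀ y, key y < key x → y ∈ T := by
    intro T hT x hx y hyx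
    have hgy : g y ≤ g x := by
      by_contra hc
      push_neg at hc
      exact absurd hyx (not_lt.mpr (le_of_lt (hkeymono x y hc)))
    rw [hlevel T hT] at hx ⊢
    omega
  set rank : Fin n → ℕ := fun x => (Finset.univ.filter (fun y => key y < key x)).card
    with hrank
  have hrankdef : ∀ x, rank x = (Finset.univ.filter (fun y => key y < key x)).card :=
    fun x => by rw [hrank]
  have rank_lt : ∀ x, rank x < n := by
    intro x
    have hsub : Finset.univ.filter (fun y => key y < key x) ⊆ Finset.univ.erase x := by
      intro y hy
      simp only [Finset.mem_filter] at hy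
      refine Finset.mem_erase.mpr ⟨fun h => ?_, Finset.mem_univ _⟩
      subst h; exact lt_irrefl _ hy.2
    have h1 := Finset.card_le_card hsub
    rw [Finset.card_erase_of_mem (Finset.mem_univ x)] at h1
    simp only [Finset.card_univ, Fintype.card_fin] at h1
    have hn : 0 < n := x.pos
    rw [hrankdef]
    omega
  have rank_mono : ∀ x y, key x < key y → rank x < rank y := by
    intro x y hxy
    have h1 : insert x (Finset.univ.filter (fun z => key z < key x)) ⊆
        Finset.univ.filter (fun z => key z < key y) := by
      intro z hz
      rcases Finset.mem_insert.mp hz with rfl | hz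
      · simp [hxy]
      · simp only [Finset.mem_filter] at hz ⊢
        exact ⟨Finset.mem_univ _, lt_trans hz.2 hxy⟩
    have h2 : x ∉ Finset.univ.filter (fun z => key z < key x) := by simp
    have h3 := Finset.card_le_card h1
    rw [Finset.card_insert_of_notMem h2] at h3
    rw [hrankdef, hrankdef]
    omega
  have rank_inj : ∀ x y, rank x = rank y → x = y := by
    intro x y h
    by_contra hne
    have hk : key x ≠ key y := fun e => hne (key_inj e)
    rcases lt_or_gt_of_ne hk with h' | h'
    · exact absurd h (ne_of_lt (rank_mono x y h'))
    · exact absurd h.symm (ne_of_lt (rank_mono y x h'))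
  have rank_surj : ∀ c, c < n → ∃ x, rank x = c := by
    have hbij : Function.Bijective (fun x : Fin n => (⟨rank x, rank_lt x⟩ : Fin n)) := by
      apply Finite.injective_iff_bijective.mp
      intro x y h
      exact rank_inj x y (by simpa using congrArg Fin.val h)
    intro c hc
    obtain ⟨x, hx⟩ := hbij.2 ⟨c, hc⟩
    exact ⟨x, by simpa using congrArg Fin.val hx⟩
  have hcard_rank : ∀ c, c ≤ n → (Finset.univ.filter (fun x => rank x < c)).card = c := by
    intro c hc
    have hb2 : (Finset.univ.filter (fun x => rank x < c)).card =
        ((Finset.univ : Finset (Fin n)).filter (fun j : Fin n => (j : ℕ) < c)).card := by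
      apply Finset.card_bij (fun x _ => (⟨rank x, rank_lt x⟩ : Fin n))
      · intro a ha
        simp only [Finset.mem_filter] at ha ⊢
        exact ⟨Finset.mem_univ _, ha.2⟩
      · intro a _ b _ h
        exact rank_inj a b (by simpa using congrArg Fin.val h)
      · intro b hb
        simp only [Finset.mem_filter] at hb
        obtain ⟨x, hx⟩ := rank_surj (b : ℕ) b.isLt
        refine ⟨x, ?_, ?_⟩
        · simp only [Finset.mem_filter]
          exact ⟨Finset.mem_univ _, by omega⟩
        · exact Fin.ext hx
    rw [hb2, card_filter_val_lt hc]
  -- each member of 𝒯 is an initial segment w.r.t. rank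
  have heq_filter : ∀ T ∈ 𝒯, T = Finset.univ.filter (fun x => rank x < T.card) := by
    intro T hT
    ext x
    simp only [Finset.mem_filter, Finset.mem_univ, true_and]
    constructor
    · intro hx
      have hsub : Finset.univ.filter (fun y => key y < key x) ⊆ T.erase x := by
        intro y hy
        simp only [Finset.mem_filter] at hy
        refine Finset.mem_erase.mpr ⟨fun h => ?_, hdown T hT x hx y hy.2⟩
        subst h; exact lt_irrefl _ hy.2
      have h1 := Finset.card_le_card hsub
      rw [Finset.card_erase_of_mem hx] at h1
      have hpos : 0 < T.card := Finset.card_pos.mpr ⟨x, hx⟩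
      rw [hrankdef]
      omega
    · intro hr
      by_contra hx
      have hsub : T ⊆ Finset.univ.filter (fun y => key y < key x) := by
        intro y hy
        simp only [Finset.mem_filter, Finset.mem_univ, true_and]
        rcases lt_trichotomy (key y) (key x) with h | h | h
        · exact h
        · exact absurd (key_inj h) (fun e => hx (e ▸ hy))
        · exact absurd (hdown T hT y hy x h) hx
      have h1 := Finset.card_le_card hsub
      rw [hrankdef] at hr
      omega
  -- the maximal chain through all of 𝒯
  set C : Fin (n - S.card + 1) → Finset (Fin n) :=
    fun i => Finset.univ.filter (fun x => rank x < n - (i : ℕ)) with hC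
  have hCdef : ∀ i, C i = Finset.univ.filter (fun x => rank x < n - (i : ℕ)) :=
    fun i => by rw [hC]
  have hcard : ∀ i : Fin (n - S.card + 1), (C i).card = n - (i : ℕ) := by
    intro i
    rw [hCdef]
    exact hcard_rank _ (Nat.sub_le _ _)
  have hS𝒯 : S ∈ 𝒯 := (hmem𝒯 S).mpr (Or.inl rfl)
  have hC0 : C 0 = Finset.univ := by
    rw [hCdef]
    ext x
    simp only [Finset.mem_filter, Finset.mem_univ, true_and, iff_true]
    have := rank_lt x
    simp only [Fin.val_zero]
    omega
  have hClast : C (Fin.last (n - S.card)) = S := by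
    rw [hCdef]
    have h1 : n - ((Fin.last (n - S.card) : Fin (n - S.card + 1)) : ℕ) = S.card := by
      simp only [Fin.val_last]
      omega
    rw [h1]
    exact (heq_filter S hS𝒯).symm
  have hssub : ∀ i : Fin (n - S.card), C i.succ ⊂ C i.castSucc := by
    intro i
    have hik : (i : ℕ) < n - S.card := i.isLt
    have hsub : C i.succ ⊆ C i.castSucc := by
      rw [hCdef, hCdef]
      intro x hx
      simp only [Finset.mem_filter, Finset.mem_univ, true_and,
        Fin.val_succ, Fin.coe_castSucc] at hx ⊢
      omega
    have hne : C i.succ ≠ C i.castSucc := by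
      intro h
      have h2 := congrArg Finset.card h
      rw [hcard, hcard] at h2
      simp only [Fin.val_succ, Fin.coe_castSucc] at h2
      omega
    exact Finset.ssubset_iff_subset_ne.mpr ⟨hsub, hne⟩
  have hmc : IsMaxChainTo S C := ⟨hC0, hClast, hcard, hssub⟩
  obtain ⟨hSf, hnotin⟩ := hf C hmc
  have hfC𝒯 : f C ∈ 𝒯 := (hmem𝒯 _).mpr (Or.inr ⟨C, hmc, rfl⟩)
  have hcle : S.card ≤ (f C).card := Finset.card_le_card hSf
  have hcle' : (f C).card ≤ n := by
    simpa using Finset.card_le_card (Finset.subset_univ (f C))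
  apply hnotin
  refine ⟨⟨n - (f C).card, by omega⟩, ?_⟩
  rw [hCdef]
  have h1 : n - ((⟨n - (f C).card, by omega⟩ : Fin (n - S.card + 1)) : ℕ) = (f C).card := by
    simp only
    omega
  rw [h1]
  exact (heq_filter (f C) hfC𝒯).symm
end

section
/- (Set-theoretic form of Lemma 1: the building-set property of 𝒢_𝒜 in ascending dimension order.) Let X be a type with at least two elements, n a natural number, and a : Fin n → ℚ weights with 0 < a i ≤ 1 for all i. Let ≼ be a linear order on the finite subsets of Fin n such that I ⊊ J implies J ≺ I, and let 𝓕 be a subfamily of 𝒢_𝒜 that is downward closed with respect to ≼ (i.e., if T ∈ 𝓕, T′ ∈ 𝒢_𝒜 and T′ ≼ T then T′ ∈ 𝓕). Then for any I_1, …, I_k ∈ 𝓕 there exist pairwise disjoint sets J_1, …, J_{k'} ∈ 𝓕 with k' ≤ k such that ⋂_{l=1}^{k} Δ_{I_l} = ⋂_{j=1}^{k'} Δ_{J_j} as subsets of Fin n → X; moreover {J_1, …, J_{k'}} is exactly the set of maximal elements (with respect to set inclusion) of the family {T ∈ 𝓕 : ⋂_{l} Δ_{I_l} ⊆ Δ_T}.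 -/
/-- `𝒢_𝒜`: the collection of subsets `S ⊆ Fin n` with `|S| ≥ 2` and `∑_{i ∈ S} a i > 1`. -/
def GA {n : ℕ} (a : Fin n → ℚ) : Set (Finset (Fin n)) :=
  {S | 2 ≤ S.card ∧ 1 < ∑ i ∈ S, a i}

/-- Set-theoretic form of Lemma 1 (building-set property of `𝒢_𝒜` in ascending dimension
order): if `𝓕 ⊆ 𝒢_𝒜` is downward closed for a linear order `r` refining reverse strict
inclusion, then any intersection of diagonals `Δ_{I l}` with `I l ∈ 𝓕` equals an
intersection of diagonals indexed by pairwise disjoint members `J j` of `𝓕`, and the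
`J j` are exactly the maximal elements (for inclusion) of
`{T ∈ 𝓕 | ⋂ l, Δ_{I l} ⊆ Δ_T}`. -/
theorem buildingSet_ascending_dimension_order {X : Type*} [Nontrivial X] {n : ℕ}
    (a : Fin n → ℚ) (ha : ∀ i, 0 < a i ∧ a i ≤ 1)
    (r : Finset (Fin n) → Finset (Fin n) → Prop)
    (hlin : IsLinearOrder (Finset (Fin n)) r)
    (hr : ∀ I J : Finset (Fin n), I ⊂ J → r J I ∧ J ≠ I)
    (𝓕 : Set (Finset (Fin n))) (h𝓕 : 𝓕 ⊆ GA a)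
    (hdc : ∀ T ∈ 𝓕, ∀ T' ∈ GA a, r T' T → T' ∈ 𝓕)
    (k : ℕ) (I : Fin k → Finset (Fin n)) (hI : ∀ l, I l ∈ 𝓕) :
    ∃ (k' : ℕ) (J : Fin k' → Finset (Fin n)), k' ≤ k ∧
      (∀ j, J j ∈ 𝓕) ∧
      (∀ j j', j ≠ j' → Disjoint (J j) (J j')) ∧
      (⋂ l, diag (X := X) (I l)) = (⋂ j, diag (X := X) (J j)) ∧
      (∀ T : Finset (Fin n), (∃ j, J j = T) ↔
        (T ∈ 𝓕 ∧ (⋂ l, diag (X := X) (I l)) ⊆ diag (X := X) T ∧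
          ∀ T' ∈ 𝓕, (⋂ l, diag (X := X) (I l)) ⊆ diag (X := X) T' →
            T ⊆ T' → T = T')) := by
  classical
  set S : Set (Fin n → X) := ⋂ l, diag (X := X) (I l) with hSdef
  set rel : Fin n → Fin n → Prop := fun i j => ∃ l, i ∈ I l ∧ j ∈ I l with hreldef
  set E : Fin n → Fin n → Prop := Relation.EqvGen rel with hEdef
  have hErefl : ∀ i, E i i := fun i => Relation.EqvGen.refl i
  have hEsymm : ∀ {i j}, E i j → E j i := fun h => Relation.EqvGen.symm _ _ h
  have hEtrans : ∀ {i j m}, E i j → E j m → E i m :=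
    fun h1 h2 => Relation.EqvGen.trans _ _ _ h1 h2
  -- Lemma A: membership in S characterized by E
  have lemA : ∀ x : Fin n → X, x ∈ S ↔ ∀ i j, E i j → x i = x j := by
    intro x
    constructor
    · intro hx i j h
      induction h with
      | rel i j hij =>
          obtain ⟨l, hi, hj⟩ := hij
          exact (Set.mem_iInter.mp hx l) i hi j hj
      | refl i => rfl
      | symm i j _ ih => exact ih.symm
      | trans i j m _ _ ih1 ih2 => exact ih1.trans ih2
    · intro h
      refine Set.mem_iInter.mpr fun l => ?_
      intro p hp q hq
      exact h p q (Relation.EqvGen.rel _ _ ⟨l, hp, hq⟩)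
  -- Lemma B: if not E i j, then some x ∈ S separates i and j
  have lemB : ∀ i j, ¬ E i j → ∃ x ∈ S, x i ≠ x j := by
    intro i j hij
    obtain ⟨y, z, hyz⟩ := exists_pair_ne X
    refine ⟨fun m => if E i m then y else z, ?_, ?_⟩
    · refine Set.mem_iInter.mpr fun l => ?_
      intro p hp q hq
      have hpq : E p q := Relation.EqvGen.rel _ _ ⟨l, hp, hq⟩
      have : E i p ↔ E i q := ⟨fun h => hEtrans h hpq, fun h => hEtrans h (hEsymm hpq)⟩
      simp only [this]
    · simp only [if_pos (hErefl i), if_neg hij]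
      exact hyz
  -- E i j ↔ all x ∈ S agree at i, j
  have hEsem : ∀ i j, E i j ↔ ∀ x ∈ S, x i = x j := by
    intro i j
    constructor
    · intro h x hx; exact (lemA x).mp hx i j h
    · intro h
      by_contra hc
      obtain ⟨x, hx, hne⟩ := lemB i j hc
      exact hne (h x hx)
  -- the classes
  set C : Fin n → Finset (Fin n) := fun i => Finset.univ.filter (fun m => E i m) with hCdef
  have memC : ∀ i m, m ∈ C i ↔ E i m := by
    intro i m; simp [hCdef]
  have hCeq : ∀ i i', E i i' → C i = C i' := by
    intro i i' h
    ext m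
    rw [memC, memC]
    exact ⟨fun h' => hEtrans (hEsymm h) h', fun h' => hEtrans h h'⟩
  have hselfC : ∀ i, i ∈ C i := fun i => (memC i i).mpr (hErefl i)
  -- chain membership: a nontrivially E-related point lies in some I l
  have chainmem : ∀ i j, E i j → i = j ∨ ((∃ l, i ∈ I l) ∧ (∃ l, j ∈ I l)) := by
    intro i j h
    induction h with
    | rel i j hij => obtain ⟨l, hi, hj⟩ := hij; exact Or.inr ⟨⟨l, hi⟩, ⟨l, hj⟩⟩
    | refl i => exact Or.inl rfl
    | symm i j _ ih => rcases ih with h | ⟨h1, h2⟩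
                       · exact Or.inl h.symm
                       · exact Or.inr ⟨h2, h1⟩
    | trans i j m _ _ ih1 ih2 =>
        rcases ih1 with h1 | ⟨h1, h1'⟩
        · rw [h1]; exact ih2
        · rcases ih2 with h2 | ⟨h2, h2'⟩
          · rw [← h2]; exact Or.inr ⟨h1, h1'⟩
          · exact Or.inr ⟨h1, h2'⟩
  have hsubC : ∀ i l, i ∈ I l → I l ⊆ C i := by
    intro i l hi m hm
    exact (memC i m).mpr (Relation.EqvGen.rel _ _ ⟨l, hi, hm⟩)
  -- any member of 𝓕 has a superset closure in 𝓕
  have superF : ∀ T ∈ 𝓕, ∀ b : Finset (Fin n), T ⊆ b → b ∈ 𝓕 := by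
    intro T hT b hTb
    obtain ⟨hcard, hsum⟩ := h𝓕 hT
    have hbGA : b ∈ GA a := by
      constructor
      · exact le_trans hcard (Finset.card_le_card hTb)
      · exact lt_of_lt_of_le hsum
          (Finset.sum_le_sum_of_subset_of_nonneg hTb (fun i _ _ => (ha i).1.le))
    rcases eq_or_ne T b with h | h
    · rwa [← h]
    · exact hdc T hT b hbGA (hr T b (lt_of_le_of_ne hTb h)).1
  -- big classes: their representative lies in some I l
  have bigC : ∀ i, 2 ≤ (C i).card → ∃ l, i ∈ I l := by
    intro i hcard
    obtain ⟨j, hj, hji⟩ := Finset.exists_mem_ne (s := C i) (by omega) i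
    have hEij : E i j := (memC i j).mp hj
    rcases chainmem i j hEij with h | ⟨⟨l, hl⟩, _⟩
    · exact absurd h.symm hji
    · exact ⟨l, hl⟩
  have blockF : ∀ i, 2 ≤ (C i).card → C i ∈ 𝓕 := by
    intro i hcard
    obtain ⟨l, hl⟩ := bigC i hcard
    exact superF (I l) (hI l) (C i) (hsubC i l hl)
  -- S ⊆ diag of any class
  have SsubC : ∀ i, S ⊆ diag (X := X) (C i) := by
    intro i x hx p hp q hq
    exact (lemA x).mp hx p q (hEtrans (hEsymm ((memC i p).mp hp)) ((memC i q).mp hq))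
  -- if S ⊆ diag T then T is within a single class
  have TsubC : ∀ T : Finset (Fin n), S ⊆ diag (X := X) T → ∀ i ∈ T, T ⊆ C i := by
    intro T hT i hi m hm
    refine (memC i m).mpr ((hEsem i m).mpr fun x hx => ?_)
    exact hT hx i hi m hm
  -- the blocks
  set blocks : Finset (Finset (Fin n)) :=
    (Finset.univ.filter (fun i => 2 ≤ (C i).card)).image C with hblocksdef
  have memblocks : ∀ b, b ∈ blocks ↔ ∃ i, 2 ≤ (C i).card ∧ C i = b := by
    intro b; simp [hblocksdef]
  refine ⟨blocks.card, fun j => (blocks.equivFin.symm j : Finset (Fin n)), ?_, ?_, ?_, ?_, ?_⟩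
  · -- k' ≤ k
    have hne : ∀ l : Fin k, (I l).Nonempty := by
      intro l
      have := (h𝓕 (hI l)).1
      exact Finset.card_pos.mp (by omega)
    set g : Fin k → Finset (Fin n) := fun l => C (hne l).choose with hgdef
    have hsub : blocks ⊆ Finset.univ.image g := by
      intro b hb
      obtain ⟨i, hcard, hCi⟩ := (memblocks b).mp hb
      obtain ⟨l, hl⟩ := bigC i hcard
      refine Finset.mem_image.mpr ⟨l, Finset.mem_univ l, ?_⟩
      have hm : (hne l).choose ∈ I l := (hne l).choose_spec
      have hE : E (hne l).choose i := Relation.EqvGen.rel _ _ ⟨l, hm, hl⟩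
      show C (hne l).choose = b
      rw [hCeq _ _ hE, hCi]
    calc blocks.card ≤ (Finset.univ.image g).card := Finset.card_le_card hsub
      _ ≤ (Finset.univ : Finset (Fin k)).card := Finset.card_image_le
      _ = k := by simp
  · -- each J j ∈ 𝓕
    intro j
    show (blocks.equivFin.symm j : Finset (Fin n)) ∈ 𝓕
    obtain ⟨i, hcard, hCi⟩ := (memblocks _).mp (blocks.equivFin.symm j).2
    rw [← hCi]
    exact blockF i hcard
  · -- pairwise disjoint
    intro j j' hjj'
    rw [Finset.disjoint_left]
    intro m hm hm'
    obtain ⟨i, _, hCi⟩ := (memblocks _).mp (blocks.equivFin.symm j).2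
    obtain ⟨i', _, hCi'⟩ := (memblocks _).mp (blocks.equivFin.symm j').2
    have h1 : E i m := (memC i m).mp (by rw [hCi]; exact hm)
    have h2 : E i' m := (memC i' m).mp (by rw [hCi']; exact hm')
    have : C i = C i' := hCeq i i' (hEtrans h1 (hEsymm h2))
    have heq : blocks.equivFin.symm j = blocks.equivFin.symm j' :=
      Subtype.ext (by rw [← hCi, ← hCi', this])
    exact hjj' (blocks.equivFin.symm.injective heq)
  · -- equality of intersections
    ext x
    rw [lemA x]
    simp only [Set.mem_iInter, diag, Set.mem_setOf_eq]
    constructor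
    · intro h j p hp q hq
      obtain ⟨i, _, hCi⟩ := (memblocks _).mp (blocks.equivFin.symm j).2
      have h1 : E i p := (memC i p).mp (by rw [hCi]; exact hp)
      have h2 : E i q := (memC i q).mp (by rw [hCi]; exact hq)
      exact h p q (hEtrans (hEsymm h1) h2)
    · intro h p q hpq
      rcases eq_or_ne p q with h' | h'
      · rw [h']
      · have hqC : q ∈ C p := (memC p q).mpr hpq
        have hcard : 2 ≤ (C p).card := by
          have : ({p, q} : Finset (Fin n)) ⊆ C p := by
            intro m hm
            rcases Finset.mem_insert.mp hm with h1 | h1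
            · rw [h1]; exact hselfC p
            · rw [Finset.mem_singleton.mp h1]; exact hqC
          calc 2 = ({p, q} : Finset (Fin n)).card := (Finset.card_pair h').symm
            _ ≤ (C p).card := Finset.card_le_card this
        have hmem : C p ∈ blocks := (memblocks _).mpr ⟨p, hcard, rfl⟩
        have : ∃ j, (blocks.equivFin.symm j : Finset (Fin n)) = C p :=
          ⟨blocks.equivFin ⟨C p, hmem⟩, by simp⟩
        obtain ⟨j, hj⟩ := this
        exact h j p (by rw [hj]; exact hselfC p) q (by rw [hj]; exact hqC)
  · -- characterization of the J's
    intro T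
    have hTblocks : (∃ j, (blocks.equivFin.symm j : Finset (Fin n)) = T) ↔ T ∈ blocks := by
      constructor
      · rintro ⟨j, rfl⟩; exact (blocks.equivFin.symm j).2
      · intro hT; exact ⟨blocks.equivFin ⟨T, hT⟩, by simp⟩
    refine Iff.trans hTblocks ?_
    constructor
    · intro hT
      obtain ⟨i, hcard, hCi⟩ := (memblocks T).mp hT
      subst hCi
      refine ⟨blockF i hcard, SsubC i, ?_⟩
      intro T' hT' hST' hsub
      have hiT' : i ∈ T' := hsub (hselfC i)
      exact Finset.Subset.antisymm hsub (TsubC T' hST' i hiT')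
    · rintro ⟨hT𝓕, hST, hmax⟩
      have hcardT : 2 ≤ T.card := (h𝓕 hT𝓕).1
      obtain ⟨i, hi⟩ := Finset.card_pos.mp (by omega : 0 < T.card)
      have hTC : T ⊆ C i := TsubC T hST i hi
      have hcardC : 2 ≤ (C i).card := le_trans hcardT (Finset.card_le_card hTC)
      have hCF : C i ∈ 𝓕 := blockF i hcardC
      have : T = C i := hmax (C i) hCF (SsubC i) hTC
      rw [this]
      exact (memblocks _).mpr ⟨i, hcardC, rfl⟩
end

section
/- (Set-theoretic form of the Claim in the proof of Theorem 4: the building-set property of 𝒢_𝒜 in the Fulton–MacPherson order.) Let X be a type with at least two elements, n a natural number, and a : Fin n → ℚ weights with 0 < a i ≤ 1 for all i. Let ≼ be a linear order on the nonempty finite subsets of Fin n such that: if max S < max T then S ≺ T, and if max S = max T and |S| > |T| then S ≺ T. Let 𝓕 be a subfamily of 𝒢_𝒜 that is downward closed with respect to ≼ (i.e., if T ∈ 𝓕, T′ ∈ 𝒢_𝒜 and T′ ≼ T then T′ ∈ 𝓕). Then for any I_1, …, I_k ∈ 𝓕 there exist pairwise disjoint sets J_1, …, J_{k''} ∈ 𝓕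 such that ⋂_{l=1}^{k} Δ_{I_l} = ⋂_{j=1}^{k''} Δ_{J_j} as subsets of Fin n → X; moreover {J_1, …, J_{k''}} is exactly the set of maximal elements (with respect to set inclusion) of the family {T ∈ 𝓕 : ⋂_{l} Δ_{I_l} ⊆ Δ_T}. -/
namespace BSFM

variable {n k : ℕ}

def Erel (I : Fin k → Finset (Fin n)) (p q : Fin n) : Prop := ∃ l, p ∈ I l ∧ q ∈ I l

def Rrel (I : Fin k → Finset (Fin n)) : Fin n → Fin n → Prop := Relation.EqvGen (Erel I)

lemma Rrel.refl (I : Fin k → Finset (Fin n)) (p : Fin n) : Rrel I p p := Relation.EqvGen.refl p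

lemma Rrel.symm {I : Fin k → Finset (Fin n)} {p q : Fin n} (h : Rrel I p q) : Rrel I q p :=
  Relation.EqvGen.symm _ _ h

lemma Rrel.trans {I : Fin k → Finset (Fin n)} {p q s : Fin n} (h : Rrel I p q)
    (h' : Rrel I q s) : Rrel I p s := Relation.EqvGen.trans _ _ _ h h'

lemma Rrel_of_mem {I : Fin k → Finset (Fin n)} {l : Fin k} {p q : Fin n}
    (hp : p ∈ I l) (hq : q ∈ I l) : Rrel I p q :=
  Relation.EqvGen.rel _ _ ⟨l, hp, hq⟩

lemma mem_diagInter {X : Type*} {I : Fin k → Finset (Fin n)} {x : Fin n → X} :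
    x ∈ (⋂ l, diag (X := X) (I l)) ↔ ∀ p q, Rrel I p q → x p = x q := by
  constructor
  · intro hx p q h
    induction h with
    | rel p q h => obtain ⟨l, hp, hq⟩ := h
                   exact (Set.mem_iInter.mp hx l) p hp q hq
    | refl p => rfl
    | symm p q _ ih => exact ih.symm
    | trans p q s _ _ ih ih' => exact ih.trans ih'
  · intro h
    exact Set.mem_iInter.mpr fun l p hp q hq => h p q (Rrel_of_mem hp hq)

lemma diagInter_subset_iff {X : Type*} [Nontrivial X] {I : Fin k → Finset (Fin n)}
    {T : Finset (Fin n)} :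
    (⋂ l, diag (X := X) (I l)) ⊆ diag (X := X) T ↔ ∀ p ∈ T, ∀ q ∈ T, Rrel I p q := by
  constructor
  · intro h p hp q hq
    by_contra hR
    obtain ⟨u, v, huv⟩ := exists_pair_ne X
    classical
    set x : Fin n → X := fun c => if Rrel I p c then u else v with hx
    have hxmem : x ∈ (⋂ l, diag (X := X) (I l)) := by
      rw [mem_diagInter]
      intro c d hcd
      have : Rrel I p c ↔ Rrel I p d := ⟨fun h' => h'.trans hcd, fun h' => h'.trans hcd.symm⟩
      simp only [hx]
      by_cases hc : Rrel I p c
      · rw [if_pos hc, if_pos (this.mp hc)]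
      · rw [if_neg hc, if_neg (fun h' => hc (this.mpr h'))]
    have := h hxmem p hp q hq
    simp only [hx, if_pos (Rrel.refl I p), if_neg hR] at this
    exact huv this
  · intro h x hx p hp q hq
    exact (mem_diagInter.mp hx) p q (h p hp q hq)

lemma mem_some_of_rel {I : Fin k → Finset (Fin n)} {p q : Fin n} (h : Rrel I p q) :
    p ≠ q → (∃ l, p ∈ I l) ∧ (∃ l, q ∈ I l) := by
  induction h with
  | rel p q h => exact fun _ => ⟨⟨h.choose, h.choose_spec.1⟩, ⟨h.choose, h.choose_spec.2⟩⟩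
  | refl p => exact fun h => absurd rfl h
  | symm p q _ ih => exact fun hne => (ih (Ne.symm hne)).symm
  | trans p q s _ _ ih ih' =>
      intro hne
      by_cases hpq : p = q
      · subst hpq; exact ih' hne
      · by_cases hqs : q = s
        · subst hqs; exact ih hpq
        · exact ⟨(ih hpq).1, (ih' hqs).2⟩

open Classical in
noncomputable def blk (I : Fin k → Finset (Fin n)) (i : Fin n) : Finset (Fin n) :=
  Finset.univ.filter (fun j => Rrel I i j)

lemma mem_blk {I : Fin k → Finset (Fin n)} {i j : Fin n} :
    j ∈ blk I i ↔ Rrel I i j := by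
  simp [blk]

lemma blk_eq_of_rel {I : Fin k → Finset (Fin n)} {i j : Fin n} (h : Rrel I i j) :
    blk I i = blk I j := by
  ext c
  simp only [mem_blk]
  exact ⟨fun h' => h.symm.trans h', fun h' => h.trans h'⟩

end BSFM

/-- Set-theoretic form of the Claim in the proof of Theorem 4 (building-set property of
`𝒢_𝒜` in the Fulton–MacPherson order): let `r` be a linear order on finite subsets of
`Fin n` such that, for nonempty sets, `max S < max T` implies `S ≺ T` and
`max S = max T` with `|S| > |T|` implies `S ≺ T`.  If `𝓕 ⊆ 𝒢_𝒜` is downward closed with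
respect to `r`, then any intersection of diagonals `Δ_{I l}` with `I l ∈ 𝓕` equals an
intersection of diagonals indexed by pairwise disjoint members `J j` of `𝓕`, and the
`J j` are exactly the maximal elements (for inclusion) of
`{T ∈ 𝓕 | ⋂ l, Δ_{I l} ⊆ Δ_T}`. -/

theorem buildingSet_FM_order {X : Type*} [Nontrivial X] {n : ℕ}
    (a : Fin n → ℚ) (ha : ∀ i, 0 < a i ∧ a i ≤ 1)
    (r : Finset (Fin n) → Finset (Fin n) → Prop)
    (hlin : IsLinearOrder (Finset (Fin n)) r)
    (hmax : ∀ S T : Finset (Fin n), S.Nonempty → T.Nonempty →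
      S.max < T.max → r S T ∧ S ≠ T)
    (hcard : ∀ S T : Finset (Fin n), S.Nonempty → T.Nonempty →
      S.max = T.max → T.card < S.card → r S T ∧ S ≠ T)
    (𝓕 : Set (Finset (Fin n))) (h𝓕 : 𝓕 ⊆ GA a)
    (hdc : ∀ T ∈ 𝓕, ∀ T' ∈ GA a, r T' T → T' ∈ 𝓕)
    (k : ℕ) (I : Fin k → Finset (Fin n)) (hI : ∀ l, I l ∈ 𝓕) :
    ∃ (k'' : ℕ) (J : Fin k'' → Finset (Fin n)),
      (∀ j, J j ∈ 𝓕) ∧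
      (∀ j j', j ≠ j' → Disjoint (J j) (J j')) ∧
      (⋂ l, diag (X := X) (I l)) = (⋂ j, diag (X := X) (J j)) ∧
      (∀ T : Finset (Fin n), (∃ j, J j = T) ↔
        (T ∈ 𝓕 ∧ (⋂ l, diag (X := X) (I l)) ⊆ diag (X := X) T ∧
          ∀ T' ∈ 𝓕, (⋂ l, diag (X := X) (I l)) ⊆ diag (X := X) T' →
            T ⊆ T' → T = T')) := by
  classical
  -- Every block of size ≥ 2 belongs to 𝓕.
  have hblkF : ∀ i : Fin n, 2 ≤ (BSFM.blk I i).card → BSFM.blk I i ∈ 𝓕 := by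
    intro i h2
    set B := BSFM.blk I i with hBdef
    have hBne : B.Nonempty := Finset.card_pos.mp (by omega)
    set M := B.max' hBne with hMdef
    have hMB : M ∈ B := B.max'_mem hBne
    -- M is related to some other element of B
    obtain ⟨b, hbB, hbM⟩ : ∃ b ∈ B, b ≠ M := by
      obtain ⟨u, hu, v, hv, huv⟩ := Finset.one_lt_card.mp (by omega : 1 < B.card)
      by_cases hu' : u = M
      · exact ⟨v, hv, by rw [← hu']; exact huv.symm⟩
      · exact ⟨u, hu, hu'⟩
    have hRMb : BSFM.Rrel I M b :=
      ((BSFM.mem_blk.mp hMB).symm).trans (BSFM.mem_blk.mp hbB)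
    obtain ⟨⟨l, hMl⟩, -⟩ := BSFM.mem_some_of_rel hRMb (Ne.symm hbM)
    -- I l ⊆ B
    have hIlB : I l ⊆ B := by
      intro c hc
      exact BSFM.mem_blk.mpr ((BSFM.mem_blk.mp hMB).trans (BSFM.Rrel_of_mem hMl hc))
    have hIlne : (I l).Nonempty := ⟨M, hMl⟩
    -- max equality
    have hmaxeq : B.max = (I l).max := by
      rw [← Finset.coe_max' hBne, ← Finset.coe_max' hIlne]
      congr 1
      apply le_antisymm
      · exact Finset.le_max' _ M hMl
      · exact Finset.max'_le _ _ _ fun c hc => Finset.le_max' _ c (hIlB hc)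
    by_cases hcardlt : (I l).card < B.card
    · have hr := (hcard B (I l) hBne hIlne hmaxeq hcardlt).1
      have hBGA : B ∈ GA a := by
        refine ⟨h2, lt_of_lt_of_le (h𝓕 (hI l)).2 ?_⟩
        exact Finset.sum_le_sum_of_subset_of_nonneg hIlB fun c _ _ => (ha c).1.le
      exact hdc (I l) (hI l) B hBGA hr
    · have : I l = B := Finset.eq_of_subset_of_card_le hIlB (by omega)
      rw [← this]; exact hI l
  -- The family of blocks of size ≥ 2.
  set 𝒥 : Finset (Finset (Fin n)) :=
    (Finset.univ.filter (fun i => 2 ≤ (BSFM.blk I i).card)).image (BSFM.blk I) with h𝒥def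
  have h𝒥mem : ∀ B : Finset (Fin n), B ∈ 𝒥 ↔ ∃ i, 2 ≤ (BSFM.blk I i).card ∧ BSFM.blk I i = B := by
    intro B; simp [h𝒥def]
  set e := 𝒥.equivFin with hedef
  refine ⟨𝒥.card, fun j => (e.symm j : Finset (Fin n)), ?_, ?_, ?_, ?_⟩
  · -- membership in 𝓕
    intro j
    obtain ⟨i, h2, hblk⟩ := (h𝒥mem _).mp (e.symm j).2
    show (e.symm j : Finset (Fin n)) ∈ 𝓕
    rw [← hblk]; exact hblkF i h2
  · -- pairwise disjoint
    intro j j' hne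
    have hne' : ((e.symm j : Finset (Fin n))) ≠ ((e.symm j' : Finset (Fin n))) := by
      intro h
      exact hne (by simpa using congrArg e (Subtype.ext h : e.symm j = e.symm j'))
    obtain ⟨i1, -, h1⟩ := (h𝒥mem _).mp (e.symm j).2
    obtain ⟨i2, -, h2⟩ := (h𝒥mem _).mp (e.symm j').2
    rw [Finset.disjoint_left]
    intro c hc0 hc0'
    have hc : c ∈ BSFM.blk I i1 := by
      have : c ∈ (e.symm j : Finset (Fin n)) := hc0
      rwa [← h1] at this
    have hc' : c ∈ BSFM.blk I i2 := by
      have : c ∈ (e.symm j' : Finset (Fin n)) := hc0'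
      rwa [← h2] at this
    have : BSFM.blk I i1 = BSFM.blk I i2 :=
      (BSFM.blk_eq_of_rel (BSFM.mem_blk.mp hc)).trans
        (BSFM.blk_eq_of_rel (BSFM.mem_blk.mp hc')).symm
    exact hne' (by rw [← h1, ← h2, this])
  · -- equality of intersections
    apply Set.ext
    intro x
    constructor
    · intro hx
      refine Set.mem_iInter.mpr fun j => ?_
      obtain ⟨i, -, hblk⟩ := (h𝒥mem _).mp (e.symm j).2
      intro p hp q hq
      have hp' : p ∈ BSFM.blk I i := by
        have : p ∈ (e.symm j : Finset (Fin n)) := hp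
        rwa [← hblk] at this
      have hq' : q ∈ BSFM.blk I i := by
        have : q ∈ (e.symm j : Finset (Fin n)) := hq
        rwa [← hblk] at this
      exact (BSFM.mem_diagInter.mp hx) p q
        ((BSFM.mem_blk.mp hp').symm.trans (BSFM.mem_blk.mp hq'))
    · intro hx
      refine Set.mem_iInter.mpr fun l p hp q hq => ?_
      by_cases hpq : p = q
      · rw [hpq]
      · have hpB : p ∈ BSFM.blk I p := BSFM.mem_blk.mpr (BSFM.Rrel.refl I p)
        have hqB : q ∈ BSFM.blk I p := BSFM.mem_blk.mpr (BSFM.Rrel_of_mem hp hq)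
        have h2 : 2 ≤ (BSFM.blk I p).card := Finset.one_lt_card.mpr ⟨p, hpB, q, hqB, hpq⟩
        have hBJ : BSFM.blk I p ∈ 𝒥 := (h𝒥mem _).mpr ⟨p, h2, rfl⟩
        have h3 : x ∈ diag (X := X)
            ((e.symm (e ⟨BSFM.blk I p, hBJ⟩) : Finset (Fin n))) :=
          Set.mem_iInter.mp hx (e ⟨_, hBJ⟩)
        rw [Equiv.symm_apply_apply] at h3
        exact h3 p hpB q hqB
  · -- characterization of maximal elements
    intro T
    constructor
    · rintro ⟨j, hj⟩
      obtain ⟨i, h2, hblk⟩ := (h𝒥mem _).mp (e.symm j).2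
      have hj' : (e.symm j : Finset (Fin n)) = T := hj
      have hT : T = BSFM.blk I i := (hblk.trans hj').symm
      subst hT
      refine ⟨hblkF i h2, ?_, ?_⟩
      · rw [BSFM.diagInter_subset_iff]
        intro p hp q hq
        exact (BSFM.mem_blk.mp hp).symm.trans (BSFM.mem_blk.mp hq)
      · intro T' hT'F hsub' hTT'
        have hi : i ∈ BSFM.blk I i := BSFM.mem_blk.mpr (BSFM.Rrel.refl I i)
        apply Finset.Subset.antisymm hTT'
        intro c hc
        exact BSFM.mem_blk.mpr
          ((BSFM.diagInter_subset_iff.mp hsub') i (hTT' hi) c hc)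
    · rintro ⟨hTF, hsub, hmaxT⟩
      have hT2 : 2 ≤ T.card := (h𝓕 hTF).1
      obtain ⟨t, ht⟩ : T.Nonempty := Finset.card_pos.mp (by omega)
      have hTblk : T ⊆ BSFM.blk I t := by
        intro c hc
        exact BSFM.mem_blk.mpr ((BSFM.diagInter_subset_iff.mp hsub) t ht c hc)
      have h2 : 2 ≤ (BSFM.blk I t).card := le_trans hT2 (Finset.card_le_card hTblk)
      have hsubblk : (⋂ l, diag (X := X) (I l)) ⊆ diag (X := X) (BSFM.blk I t) := by
        rw [BSFM.diagInter_subset_iff]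
        intro p hp q hq
        exact (BSFM.mem_blk.mp hp).symm.trans (BSFM.mem_blk.mp hq)
      have hTeq : T = BSFM.blk I t := hmaxT _ (hblkF t h2) hsubblk hTblk
      have hBJ : BSFM.blk I t ∈ 𝒥 := (h𝒥mem _).mpr ⟨t, h2, rfl⟩
      refine ⟨e ⟨_, hBJ⟩, ?_⟩
      show (e.symm (e ⟨BSFM.blk I t, hBJ⟩) : Finset (Fin n)) = T
      rw [Equiv.symm_apply_apply, hTeq]
end
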